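/- For the DFA A' constructed from a monotone circuit g_1,…,g_n containing no ∧-gates: val(n) = 1 if and only if state ⊤ is reachable from state n in A', i.e., there exists a word w ∈ Σ* with δ(n,w) = ⊤. -/
import Mathlib


/-- The type of a gate in a monotone circuit with `n + 1` gates: a `0`-gate, a
`1`-gate, an `∧`-gate with children `l, r`, or an `∨`-gate with children `l, r`. -/
inductive Gate (n : ℕ) where
  | zero : Gate n
  | one : Gate n
  | and (l r : Fin (n + 1)) : Gate n
  | or (l r : Fin (n + 1)) : Gate n

/-- A monotone circuit with gates `g_0, …, g_n`, where the children of each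
`∧`- or `∨`-gate have strictly smaller indices. -/
structure Circuit (n : ℕ) where
  gate : Fin (n + 1) → Gate n
  and_lt : ∀ i l r, gate i = Gate.and l r → l < i ∧ r < i
  or_lt : ∀ i l r, gate i = Gate.or l r → l < i ∧ r < i

set_option linter.unusedVariables false in
/-- The value of gate `i`: `0`-gates are false, `1`-gates are true, `∧`-gates and
`∨`-gates take the conjunction resp. disjunction of their children's values. -/
def Circuit.val {n : ℕ} (c : Circuit n) (i : Fin (n + 1)) : Bool :=
  match h : c.gate i with
  | Gate.zero => false
  | Gate.one => true
  | Gate.and l r =>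
      have hlt := c.and_lt i l r h;
      c.val l && c.val r
  | Gate.or l r =>
      have hlt := c.or_lt i l r h
      c.val l || c.val r
termination_by (i : ℕ)
decreasing_by
  · exact hlt.1
  · exact hlt.2
  · exact hlt.1
  · exact hlt.2

/-- The alphabet `Σ = {x, y} ∪ {aᵢ, bᵢ : 0 ≤ i ≤ n}`. -/
inductive Alpha (n : ℕ) where
  | x : Alpha n
  | y : Alpha n
  | a (i : Fin (n + 1)) : Alpha n
  | b (i : Fin (n + 1)) : Alpha n
deriving DecidableEq

/-- The states of the DFA `A'`: the initial state `s`, the accepting states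
`⊥` (bot) and `⊤` (top), a state for each gate, and a non-accepting sink. -/
inductive StA (n : ℕ) where
  | s : StA n
  | bot : StA n
  | top : StA n
  | g (i : Fin (n + 1)) : StA n
  | sink : StA n
deriving DecidableEq

/-- The DFA `A'` constructed from the monotone circuit `c`. -/
def dfaA {n : ℕ} (c : Circuit n) : DFA (Alpha n) (StA n) where
  step := fun p ch =>
    match p, ch with
    | StA.s, Alpha.x => StA.g (Fin.last n)
    | StA.top, Alpha.y => StA.s
    | StA.g i, Alpha.a j =>
        if j = i then
          match c.gate i with
          | Gate.zero => StA.bot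
          | Gate.one => StA.top
          | Gate.and l _ => StA.g l
          | Gate.or l _ => StA.g l
        else StA.sink
    | StA.g i, Alpha.b j =>
        if j = i then
          match c.gate i with
          | Gate.zero => StA.bot
          | Gate.one => StA.top
          | Gate.and _ r => StA.g r
          | Gate.or _ r => StA.g r
        else StA.sink
    | _, _ => StA.sink
  start := StA.s
  accept := {StA.bot, StA.top}

/-- The states of the DFA `B`: the initial and accepting state `q`, a state `t`,
a state for each gate (only the `∧`-gate states are used), and a sink. -/
inductive StB (n : ℕ) where
  | q : StB n
  | t : StB n
  | g (i : Fin (n + 1)) : StB n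
  | sink : StB n
deriving DecidableEq

/-- The DFA `B` constructed from the monotone circuit `c`. -/
def dfaB {n : ℕ} (c : Circuit n) : DFA (Alpha n) (StB n) where
  step := fun p ch =>
    match p, ch with
    | StB.q, Alpha.x => StB.t
    | StB.t, Alpha.y => StB.q
    | StB.t, Alpha.a i =>
        match c.gate i with
        | Gate.and _ _ => StB.g i
        | Gate.or _ _ => StB.t
        | Gate.one => StB.t
        | Gate.zero => StB.sink
    | StB.t, Alpha.b i =>
        match c.gate i with
        | Gate.or _ _ => StB.t
        | Gate.one => StB.t
        | _ => StB.sink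
    | StB.g i, Alpha.b j =>
        if j = i then
          match c.gate i with
          | Gate.and _ _ => StB.t
          | _ => StB.sink
        else StB.sink
    | _, _ => StB.sink
  start := StB.q
  accept := {StB.q}


section Aux
variable {n : ℕ} (c : Circuit n)

lemma val_zero' {i : Fin (n+1)} (h : c.gate i = Gate.zero) : c.val i = false := by
  rw [Circuit.val]; split <;> simp_all

lemma val_one' {i : Fin (n+1)} (h : c.gate i = Gate.one) : c.val i = true := by
  rw [Circuit.val]; split <;> simp_all

lemma val_or' {i l r : Fin (n+1)} (h : c.gate i = Gate.or l r) :
    c.val i = (c.val l || c.val r) := by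
  rw [Circuit.val]; split <;> simp_all

lemma evalFrom_sink : ∀ w, (dfaA c).evalFrom StA.sink w = StA.sink := by
  intro w
  induction w with
  | nil => rfl
  | cons ch w ih => cases ch <;> exact ih

lemma evalFrom_bot_ne_top : ∀ w, (dfaA c).evalFrom StA.bot w ≠ StA.top := by
  intro w
  cases w with
  | nil => simp [DFA.evalFrom]
  | cons ch w =>
    show (dfaA c).evalFrom ((dfaA c).step StA.bot ch) w ≠ StA.top
    have h : (dfaA c).step StA.bot ch = StA.sink := by cases ch <;> rfl
    rw [h, evalFrom_sink]; simp

lemma key (hno : ∀ (i : Fin (n + 1)) (l r : Fin (n + 1)), c.gate i ≠ Gate.and l r) :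
    ∀ m : ℕ, ∀ i : Fin (n+1), i.1 < m →
      (c.val i = true ↔ ∃ w : List (Alpha n), (dfaA c).evalFrom (StA.g i) w = StA.top) := by
  intro m
  induction m with
  | zero => intro i h; omega
  | succ m ih =>
    intro i hi
    constructor
    · intro hv
      rcases hg : c.gate i with _ | _ | ⟨l, r⟩ | ⟨l, r⟩
      · rw [val_zero' c hg] at hv; exact absurd hv (by simp)
      · refine ⟨[Alpha.a i], ?_⟩
        simp [DFA.evalFrom, dfaA, hg]
      · exact absurd hg (hno i l r)
      · rw [val_or' c hg] at hv
        have hlt := c.or_lt i l r hg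
        rcases Bool.or_eq_true_iff.mp hv with hl | hr
        · obtain ⟨w, hw⟩ := (ih l (by omega)).mp hl
          refine ⟨Alpha.a i :: w, ?_⟩
          show (dfaA c).evalFrom ((dfaA c).step (StA.g i) (Alpha.a i)) w = StA.top
          have : (dfaA c).step (StA.g i) (Alpha.a i) = StA.g l := by
            simp [dfaA, hg]
          rw [this]; exact hw
        · obtain ⟨w, hw⟩ := (ih r (by omega)).mp hr
          refine ⟨Alpha.b i :: w, ?_⟩
          show (dfaA c).evalFrom ((dfaA c).step (StA.g i) (Alpha.b i)) w = StA.top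
          have : (dfaA c).step (StA.g i) (Alpha.b i) = StA.g r := by
            simp [dfaA, hg]
          rw [this]; exact hw
    · rintro ⟨w, hw⟩
      cases w with
      | nil => simp [DFA.evalFrom] at hw
      | cons ch w =>
        have hw' : (dfaA c).evalFrom ((dfaA c).step (StA.g i) ch) w = StA.top := hw
        cases ch with
        | x => rw [show (dfaA c).step (StA.g i) Alpha.x = StA.sink from rfl,
                 evalFrom_sink] at hw'; exact absurd hw' (by simp)
        | y => rw [show (dfaA c).step (StA.g i) Alpha.y = StA.sink from rfl,
                 evalFrom_sink] at hw'; exact absurd hw' (by simp)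
        | a j =>
          by_cases hj : j = i
          · subst hj
            rcases hg : c.gate j with _ | _ | ⟨l, r⟩ | ⟨l, r⟩
            · have : (dfaA c).step (StA.g j) (Alpha.a j) = StA.bot := by simp [dfaA, hg]
              rw [this] at hw'; exact absurd hw' (evalFrom_bot_ne_top c w)
            · exact val_one' c hg
            · exact absurd hg (hno j l r)
            · have : (dfaA c).step (StA.g j) (Alpha.a j) = StA.g l := by simp [dfaA, hg]
              rw [this] at hw'
              have hlt := c.or_lt j l r hg
              have hl := (ih l (by omega)).mpr ⟨w, hw'⟩
              rw [val_or' c hg, hl]; simp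
          · have : (dfaA c).step (StA.g i) (Alpha.a j) = StA.sink := by simp [dfaA, hj]
            rw [this, evalFrom_sink] at hw'; exact absurd hw' (by simp)
        | b j =>
          by_cases hj : j = i
          · subst hj
            rcases hg : c.gate j with _ | _ | ⟨l, r⟩ | ⟨l, r⟩
            · have : (dfaA c).step (StA.g j) (Alpha.b j) = StA.bot := by simp [dfaA, hg]
              rw [this] at hw'; exact absurd hw' (evalFrom_bot_ne_top c w)
            · exact val_one' c hg
            · exact absurd hg (hno j l r)
            · have : (dfaA c).step (StA.g j) (Alpha.b j) = StA.g r := by simp [dfaA, hg]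
              rw [this] at hw'
              have hlt := c.or_lt j l r hg
              have hr := (ih r (by omega)).mpr ⟨w, hw'⟩
              rw [val_or' c hg, hr]; simp
          · have : (dfaA c).step (StA.g i) (Alpha.b j) = StA.sink := by simp [dfaA, hj]
            rw [this, evalFrom_sink] at hw'; exact absurd hw' (by simp)

end Aux

/-- For a monotone circuit without `∧`-gates: the output gate evaluates to `1` iff
the state `⊤` is reachable from the state of the output gate in `A'`. -/
theorem stmt14 {n : ℕ} (c : Circuit n)
    (hno : ∀ (i : Fin (n + 1)) (l r : Fin (n + 1)), c.gate i ≠ Gate.and l r) :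
    c.val (Fin.last n) = true ↔
      ∃ w : List (Alpha n), (dfaA c).evalFrom (StA.g (Fin.last n)) w = StA.top := by
  exact key c hno (n+1) (Fin.last n) (by simp [Fin.last])
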